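/- arXiv:2003.13966 — 6 statements merged into one kernel-verified Lean document; each statement's English description precedes it below -/
import Mathlib

section
/- For all real numbers a > 0, S > 0 and λ ≥ 1, we have λ²a/(λ²a + S) − a/(a + S) ≤ (λ − 1)/(λ + 1). -/
theorem pa_core_inequality (a S l : ℝ) (ha : 0 < a) (hS : 0 < S) (hl : 1 ≤ l) :
    l ^ 2 * a / (l ^ 2 * a + S) - a / (a + S) ≤ (l - 1) / (l + 1) := by
  have h1 : 0 < l ^ 2 * a + S := by nlinarith
  have h2 : 0 < a + S := by linarith
  have h3 : 0 < l + 1 := by linarith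
  rw [div_sub_div _ _ (ne_of_gt h1) (ne_of_gt h2), div_le_div_iff₀ (by positivity) h3]
  nlinarith [mul_nonneg (sub_nonneg.2 hl) (sq_nonneg (l * a - S)), sq_nonneg (l*a - S)]
end

section
/- Let k ≥ 1, let v, v' ∈ ℝ^k with all coordinates strictly positive, and let λ ≥ 1 be such that v_i/λ ≤ v'_i ≤ λ·v_i for every i. Define the Proportional Allocation x_i(v) = v_i / Σ_j v_j. Then for every i, |x_i(v') − x_i(v)| ≤ (λ − 1)/(λ + 1). -/
lemma pa_key (a b a' b' l : ℝ) (ha : 0 < a) (ha' : 0 < a') (hb : 0 ≤ b)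
    (hb' : 0 ≤ b') (hl : 1 ≤ l) (h1 : a' ≤ l * a) (h2 : b ≤ l * b') :
    a' / (a' + b') - a / (a + b) ≤ (l - 1) / (l + 1) := by
  have hl0 : (0:ℝ) < l := lt_of_lt_of_le one_pos hl
  have hd1 : 0 < a' + b' := by linarith
  have hd2 : 0 < a + b := by linarith
  have step1 : a' / (a' + b') ≤ l^2 * a / (l^2 * a + b) := by
    rw [div_le_div_iff₀ hd1 (by positivity)]
    nlinarith [mul_pos ha hl0, mul_nonneg hb' hb]
  have step2 : l^2 * a / (l^2 * a + b) - a / (a + b) ≤ (l - 1) / (l + 1) := by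
    rw [div_sub_div _ _ (by positivity : (l^2*a+b) ≠ 0) (ne_of_gt hd2),
      div_le_div_iff₀ (by positivity) (by linarith)]
    nlinarith [sq_nonneg (l * a - b), mul_nonneg (mul_nonneg ha.le hb) (sq_nonneg (l-1)),
      sq_nonneg (l*a+b), mul_pos ha hd2]
  linarith

theorem pa_value_stable (k : ℕ) (hk : 1 ≤ k) (v v' : Fin k → ℝ)
    (hv : ∀ i, 0 < v i) (hv' : ∀ i, 0 < v' i) (l : ℝ) (hl : 1 ≤ l)
    (hclose : ∀ i, v i / l ≤ v' i ∧ v' i ≤ l * v i) (i : Fin k) :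
    |v' i / (∑ j, v' j) - v i / (∑ j, v j)| ≤ (l - 1) / (l + 1) := by
  have hl0 : (0:ℝ) < l := lt_of_lt_of_le one_pos hl
  set b := ∑ j ∈ Finset.univ.erase i, v j with hbdef
  set b' := ∑ j ∈ Finset.univ.erase i, v' j with hb'def
  have hsum : ∑ j, v j = v i + b := by
    rw [hbdef, Finset.add_sum_erase _ _ (Finset.mem_univ i)]
  have hsum' : ∑ j, v' j = v' i + b' := by
    rw [hb'def, Finset.add_sum_erase _ _ (Finset.mem_univ i)]
  have hb : 0 ≤ b := Finset.sum_nonneg fun j _ => (hv j).le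
  have hb' : 0 ≤ b' := Finset.sum_nonneg fun j _ => (hv' j).le
  have hbb' : b ≤ l * b' := by
    rw [hbdef, hb'def, Finset.mul_sum]
    refine Finset.sum_le_sum fun j _ => ?_
    have := (hclose j).1
    rw [div_le_iff₀ hl0] at this
    linarith [this]
  have hb'b : b' ≤ l * b := by
    rw [hbdef, hb'def, Finset.mul_sum]
    exact Finset.sum_le_sum fun j _ => (hclose j).2
  have h1 : v' i ≤ l * v i := (hclose i).2
  have h1' : v i ≤ l * v' i := by
    have := (hclose i).1
    rw [div_le_iff₀ hl0] at this
    linarith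
  rw [hsum, hsum', abs_sub_le_iff]
  exact ⟨pa_key _ _ _ _ _ (hv i) (hv' i) hb hb' hl h1 hbb',
    pa_key _ _ _ _ _ (hv' i) (hv i) hb' hb hl h1' hb'b⟩
end

section
/- Let p > 0, let k ≥ 1, and let v, v' ∈ ℝ_{>0}^k with v_i/λ ≤ v'_i ≤ λ·v_i for all i, where λ ≥ 1. Define x_i(v) = v_i^p / Σ_j v_j^p. Then for every i, |x_i(v') − x_i(v)| ≤ (λ^p − 1)/(λ^p + 1). -/
lemma frac_bound (A B S S' L : ℝ) (hA : 0 < A) (hB : 0 < B) (hAS : A ≤ S)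
    (hS' : 0 < S') (hL : 1 ≤ L) (hBA : B ≤ L * A)
    (hsum : B + (S - A) / L ≤ S') : B / S' - A / S ≤ (L - 1) / (L + 1) := by
  have hL0 : 0 < L := lt_of_lt_of_le one_pos hL
  have hS : 0 < S := lt_of_lt_of_le hA hAS
  have hD : 0 < L * B + S - A := by nlinarith
  have hBC : 0 < B + (S - A) / L := by
    have : B + (S - A) / L = (L * B + S - A) / L := by field_simp; ring
    rw [this]; positivity
  have h2 : B / S' ≤ B / (B + (S - A) / L) := div_le_div_of_nonneg_left hB.le hBC hsum
  have heq : B / (B + (S - A) / L) = L * B / (L * B + S - A) := by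
    rw [div_eq_div_iff hBC.ne' hD.ne']; field_simp; ring
  have h3 : L * B / (L * B + S - A) - A / S ≤ (L - 1) / (L + 1) := by
    rw [div_sub_div _ _ (ne_of_gt hD) (ne_of_gt hS),
      div_le_div_iff₀ (by positivity) (by positivity)]
    rcases le_or_gt ((L + 1) * A) (2 * S) with h | h
    · nlinarith [mul_nonneg (mul_nonneg hL0.le (sub_nonneg.2 hBA)) (by linarith : (0:ℝ) ≤ 2 * S - (L + 1) * A),
        mul_nonneg (by linarith : (0:ℝ) ≤ L - 1) (sq_nonneg ((L + 1) * A - S))]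
    · nlinarith [mul_pos (mul_pos hL0 hB) (by linarith : (0:ℝ) < (L + 1) * A - 2 * S),
        mul_nonneg (by linarith : (0:ℝ) ≤ S - A) (by nlinarith : (0:ℝ) ≤ (L - 1) * S + (L + 1) * A)]
  rw [heq] at h2
  linarith

lemma one_sided (k : ℕ) (a b : Fin k → ℝ) (ha : ∀ j, 0 < a j) (hb : ∀ j, 0 < b j)
    (L : ℝ) (hL : 1 ≤ L) (h1 : ∀ j, a j / L ≤ b j) (h2 : ∀ j, b j ≤ L * a j) (i : Fin k) :
    b i / (∑ j, b j) - a i / (∑ j, a j) ≤ (L - 1) / (L + 1) := by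
  have hne : (Finset.univ : Finset (Fin k)).Nonempty := ⟨i, Finset.mem_univ i⟩
  have hS : 0 < ∑ j, a j := Finset.sum_pos (fun j _ => ha j) hne
  have hS' : 0 < ∑ j, b j := Finset.sum_pos (fun j _ => hb j) hne
  have hAS : a i ≤ ∑ j, a j :=
    Finset.single_le_sum (fun j _ => (ha j).le) (Finset.mem_univ i)
  have herase_a : ∑ j ∈ Finset.univ.erase i, a j = (∑ j, a j) - a i := by
    rw [← Finset.add_sum_erase Finset.univ a (Finset.mem_univ i)]; ring
  have hstep : (∑ j ∈ Finset.univ.erase i, a j) / L ≤ ∑ j ∈ Finset.univ.erase i, b j := by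
    rw [Finset.sum_div]
    exact Finset.sum_le_sum (fun j _ => h1 j)
  have hsum : b i + ((∑ j, a j) - a i) / L ≤ ∑ j, b j := by
    rw [← Finset.add_sum_erase Finset.univ b (Finset.mem_univ i), ← herase_a]
    linarith
  exact frac_bound (a i) (b i) _ _ L (ha i) (hb i) hAS hS' hL (h2 i) hsum

theorem powered_pa_value_stable (p : ℝ) (hp : 0 < p) (k : ℕ) (hk : 1 ≤ k)
    (v v' : Fin k → ℝ) (hv : ∀ i, 0 < v i) (hv' : ∀ i, 0 < v' i)
    (l : ℝ) (hl : 1 ≤ l) (hclose : ∀ i, v i / l ≤ v' i ∧ v' i ≤ l * v i) (i : Fin k) :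
    |v' i ^ p / (∑ j, v' j ^ p) - v i ^ p / (∑ j, v j ^ p)| ≤ (l ^ p - 1) / (l ^ p + 1) := by
  have hl0 : 0 < l := lt_of_lt_of_le one_pos hl
  have hL : 1 ≤ l ^ p := Real.one_le_rpow hl hp.le
  have hLp : 0 < l ^ p := Real.rpow_pos_of_pos hl0 p
  have ha : ∀ j, 0 < v j ^ p := fun j => Real.rpow_pos_of_pos (hv j) p
  have hb : ∀ j, 0 < v' j ^ p := fun j => Real.rpow_pos_of_pos (hv' j) p
  have h1 : ∀ j, v j ^ p / l ^ p ≤ v' j ^ p := by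
    intro j
    rw [← Real.div_rpow (hv j).le hl0.le]
    exact Real.rpow_le_rpow (div_nonneg (hv j).le hl0.le) (hclose j).1 hp.le
  have h2 : ∀ j, v' j ^ p ≤ l ^ p * v j ^ p := by
    intro j
    rw [← Real.mul_rpow hl0.le (hv j).le]
    exact Real.rpow_le_rpow (hv' j).le (hclose j).2 hp.le
  have h1' : ∀ j, v' j ^ p / l ^ p ≤ v j ^ p := by
    intro j
    rw [div_le_iff₀ hLp]
    nlinarith [h2 j, ha j]
  have h2' : ∀ j, v j ^ p ≤ l ^ p * v' j ^ p := by
    intro j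
    have := h1 j
    rw [div_le_iff₀ hLp] at this
    linarith
  rw [abs_sub_le_iff]
  constructor
  · exact one_sided k (fun j => v j ^ p) (fun j => v' j ^ p) ha hb (l ^ p) hL h1 h2 i
  · exact one_sided k (fun j => v' j ^ p) (fun j => v j ^ p) hb ha (l ^ p) hL h1' h2' i
end

section
/- Fix ℓ > 0 and k ≥ 2. Let v, v' ∈ ℝ_{>0}^k and λ ≥ 1 satisfy v_i/λ ≤ v'_i ≤ λ·v_i for all i. Let x(v) and x(v') be the Inverse Proportional Allocations with parameter ℓ on v and v' respectively (x_i = max(0, 1 − c·v_i^{−ℓ}) with c the normalizing constant). Then for every i, |x_i(v') − x_i(v)| ≤ 1 − λ^{−2ℓ}. -/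
private lemma ipa_c_bound (ℓ : ℝ) (hℓ : 0 < ℓ) (k : ℕ)
    (v v' : Fin k → ℝ) (hv : ∀ i, 0 < v i) (hv' : ∀ i, 0 < v' i)
    (l : ℝ) (hl : 1 ≤ l) (hlow : ∀ i, v i ≤ l * v' i)
    (c c' : ℝ) (hc' : 0 ≤ c')
    (hsum : ∑ i, max 0 (1 - c * (v i) ^ (-ℓ)) = 1)
    (hsum' : ∑ i, max 0 (1 - c' * (v' i) ^ (-ℓ)) = 1) :
    l ^ (-ℓ) * c ≤ c' := by
  have hl0 : (0:ℝ) < l := lt_of_lt_of_le one_pos hl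
  have hA : (0:ℝ) < l ^ (-ℓ) := Real.rpow_pos_of_pos hl0 _
  by_contra h
  push_neg at h
  have hcpos : 0 < c := by
    rcases le_or_gt c 0 with hc0 | hc0
    · exact absurd (le_trans (mul_nonpos_of_nonneg_of_nonpos hA.le hc0) hc') (not_le.mpr h)
    · exact hc0
  -- for every i, c' * v' i ^ (-ℓ) < c * v i ^ (-ℓ)
  have hpt : ∀ i, c' * (v' i) ^ (-ℓ) < c * (v i) ^ (-ℓ) := by
    intro i
    have ht : (0:ℝ) < (v i) ^ (-ℓ) := Real.rpow_pos_of_pos (hv i) _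
    have ht' : (v' i) ^ (-ℓ) ≤ l ^ ℓ * (v i) ^ (-ℓ) := by
      have h1 : (v i / l) ^ (-ℓ) = l ^ ℓ * (v i) ^ (-ℓ) := by
        rw [Real.div_rpow (hv i).le hl0.le, Real.rpow_neg hl0.le, div_eq_mul_inv, inv_inv,
          mul_comm]
      have h2 : v i / l ≤ v' i := by
        rw [div_le_iff₀ hl0, mul_comm]; exact hlow i
      calc (v' i) ^ (-ℓ) ≤ (v i / l) ^ (-ℓ) :=
            Real.rpow_le_rpow_of_nonpos (div_pos (hv i) hl0) h2 (by linarith)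
        _ = l ^ ℓ * (v i) ^ (-ℓ) := h1
    have hB : (0:ℝ) < l ^ ℓ := Real.rpow_pos_of_pos hl0 _
    have key : c' * (l ^ ℓ * (v i) ^ (-ℓ)) < c * (v i) ^ (-ℓ) := by
      have hmul : l ^ (-ℓ) * l ^ ℓ = 1 := by
        rw [← Real.rpow_add hl0, neg_add_cancel, Real.rpow_zero]
      have : c' * l ^ ℓ < c := by
        have h4 := mul_lt_mul_of_pos_right h hB
        have h5 : l ^ (-ℓ) * c * l ^ ℓ = c := by
          rw [mul_assoc, mul_comm c, ← mul_assoc, hmul, one_mul]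
        linarith
      calc c' * (l ^ ℓ * (v i) ^ (-ℓ)) = (c' * l ^ ℓ) * (v i) ^ (-ℓ) := by ring
        _ < c * (v i) ^ (-ℓ) := mul_lt_mul_of_pos_right this ht
    calc c' * (v' i) ^ (-ℓ) ≤ c' * (l ^ ℓ * (v i) ^ (-ℓ)) :=
          mul_le_mul_of_nonneg_left ht' hc'
      _ < c * (v i) ^ (-ℓ) := key
  -- hence each allocation term goes up, strictly somewhere
  have hle : ∀ i, max 0 (1 - c * (v i) ^ (-ℓ)) ≤ max 0 (1 - c' * (v' i) ^ (-ℓ)) := by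
    intro i; exact max_le_max le_rfl (by linarith [hpt i])
  obtain ⟨j, hj⟩ : ∃ j, 0 < max 0 (1 - c * (v j) ^ (-ℓ)) := by
    by_contra hall
    push_neg at hall
    have : ∑ i, max 0 (1 - c * (v i) ^ (-ℓ)) = 0 :=
      Finset.sum_eq_zero fun i _ => le_antisymm (hall i) (le_max_left _ _)
    rw [hsum] at this; norm_num at this
  have hjlt : max 0 (1 - c * (v j) ^ (-ℓ)) < max 0 (1 - c' * (v' j) ^ (-ℓ)) := by
    have h1 : max 0 (1 - c * (v j) ^ (-ℓ)) = 1 - c * (v j) ^ (-ℓ) := by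
      rcases max_cases (0:ℝ) (1 - c * (v j) ^ (-ℓ)) with ⟨h, _⟩ | ⟨h, _⟩
      · rw [h] at hj; linarith
      · exact h
    calc max 0 (1 - c * (v j) ^ (-ℓ)) = 1 - c * (v j) ^ (-ℓ) := h1
      _ < 1 - c' * (v' j) ^ (-ℓ) := by linarith [hpt j]
      _ ≤ max 0 (1 - c' * (v' j) ^ (-ℓ)) := le_max_right _ _
  have : (1:ℝ) < 1 := by
    calc (1:ℝ) = ∑ i, max 0 (1 - c * (v i) ^ (-ℓ)) := hsum.symm
      _ < ∑ i, max 0 (1 - c' * (v' i) ^ (-ℓ)) :=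
          Finset.sum_lt_sum (fun i _ => hle i) ⟨j, Finset.mem_univ j, hjlt⟩
      _ = 1 := hsum'
  exact absurd this (lt_irrefl 1)

private lemma ipa_side (A t t' c c' : ℝ) (hA0 : 0 < A) (hA1 : A ≤ 1)
    (hc : 0 ≤ c) (hc' : 0 ≤ c') (ht : 0 < t) (ht' : 0 < t')
    (htt : A * t ≤ t') (hcc : A * c ≤ c') :
    max 0 (1 - c' * t') - max 0 (1 - c * t) ≤ 1 - A * A := by
  have hx0 : 0 ≤ max 0 (1 - c * t) := le_max_left _ _
  have hx2 : 1 - c * t ≤ max 0 (1 - c * t) := le_max_right _ _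
  have hct : A * A * (c * t) ≤ c' * t' := by
    calc A * A * (c * t) = (A * c) * (A * t) := by ring
      _ ≤ c' * t' := mul_le_mul hcc htt (by positivity) hc'
  have hAA : A * A ≤ 1 := by nlinarith
  rcases le_or_gt (1 - c' * t') 0 with hy | hy
  · rw [max_eq_left hy]
    linarith
  · rw [max_eq_right hy.le]
    rcases le_or_gt (c * t) 1 with h1 | h1
    · nlinarith [mul_nonneg (by linarith : (0:ℝ) ≤ 1 - A * A) (by linarith : (0:ℝ) ≤ 1 - c * t)]
    · nlinarith [mul_nonneg (mul_nonneg hA0.le hA0.le) (by linarith : (0:ℝ) ≤ c * t - 1)]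

theorem ipa_value_stable (ℓ : ℝ) (hℓ : 0 < ℓ) (k : ℕ) (hk : 2 ≤ k)
    (v v' : Fin k → ℝ) (hv : ∀ i, 0 < v i) (hv' : ∀ i, 0 < v' i)
    (l : ℝ) (hl : 1 ≤ l) (hclose : ∀ i, v i / l ≤ v' i ∧ v' i ≤ l * v i)
    (c c' : ℝ) (hc : 0 ≤ c) (hc' : 0 ≤ c')
    (hsum : ∑ i, max 0 (1 - c * (v i) ^ (-ℓ)) = 1)
    (hsum' : ∑ i, max 0 (1 - c' * (v' i) ^ (-ℓ)) = 1) (i : Fin k) :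
    |max 0 (1 - c' * (v' i) ^ (-ℓ)) - max 0 (1 - c * (v i) ^ (-ℓ))| ≤
      1 - l ^ (-(2 * ℓ)) := by
  have hl0 : (0:ℝ) < l := lt_of_lt_of_le one_pos hl
  set A := l ^ (-ℓ) with hAdef
  have hA0 : 0 < A := Real.rpow_pos_of_pos hl0 _
  have hA1 : A ≤ 1 := Real.rpow_le_one_of_one_le_of_nonpos hl (by linarith)
  have hAsq : l ^ (-(2 * ℓ)) = A * A := by
    rw [hAdef, ← Real.rpow_add hl0]; ring_nf
  -- bounds relating c and c'
  have hup : ∀ j, v' j ≤ l * v j := fun j => (hclose j).2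
  have hup' : ∀ j, v j ≤ l * v' j := by
    intro j
    have := (hclose j).1
    rw [div_le_iff₀ hl0] at this
    calc v j ≤ v' j * l := this
      _ = l * v' j := mul_comm _ _
  have hcc1 : A * c ≤ c' := ipa_c_bound ℓ hℓ k v v' hv hv' l hl hup' c c' hc' hsum hsum'
  have hcc2 : A * c' ≤ c := ipa_c_bound ℓ hℓ k v' v hv' hv l hl hup c' c hc hsum' hsum
  -- bounds relating t and t'
  have hbase : ∀ (a b : ℝ), 0 < a → 0 < b → b ≤ l * a → A * a ^ (-ℓ) ≤ b ^ (-ℓ) := by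
    intro a b ha hb hab
    have h1 : (l * a) ^ (-ℓ) = A * a ^ (-ℓ) := by
      rw [Real.mul_rpow hl0.le ha.le, hAdef]
    calc A * a ^ (-ℓ) = (l * a) ^ (-ℓ) := h1.symm
      _ ≤ b ^ (-ℓ) := Real.rpow_le_rpow_of_nonpos hb hab (by linarith)
  have htt1 : A * (v i) ^ (-ℓ) ≤ (v' i) ^ (-ℓ) := hbase (v i) (v' i) (hv i) (hv' i) (hup i)
  have htt2 : A * (v' i) ^ (-ℓ) ≤ (v i) ^ (-ℓ) := hbase (v' i) (v i) (hv' i) (hv i) (hup' i)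
  have ht : (0:ℝ) < (v i) ^ (-ℓ) := Real.rpow_pos_of_pos (hv i) _
  have ht' : (0:ℝ) < (v' i) ^ (-ℓ) := Real.rpow_pos_of_pos (hv' i) _
  rw [hAsq, abs_sub_le_iff]
  exact ⟨ipa_side A _ _ c c' hA0 hA1 hc hc' ht ht' htt1 hcc1,
    ipa_side A _ _ c' c hA0 hA1 hc' hc ht' ht htt2 hcc2⟩
end

section
/- Fix k ≥ 2 and v ∈ ℝ_{>0}^k, and let x be the Inverse Proportional Allocation with parameter ℓ = 1, i.e., x_i = max(0, 1 − c/v_i) with c ≥ 0 the unique constant making Σ_i x_i = 1. Then Σ_i v_i x_i ≥ (3/4)·max_i v_i. -/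
/-!
Write `x_i = max 0 (1 - c / v_i)`. Since `x_i > 0` forces `v_i > c`, every term `(v_i - c) x_i` is
nonnegative, so with `∑ x_i = 1` the welfare `∑ v_i x_i = c + ∑ (v_i - c) x_i` is at least
`c + (M - c) x_j` for a bidder `j` of top value `M`. If `c > M` this bound is already at least `M`; otherwise
`x_j = 1 - c / M` and the bound is `c + (M - c)² / M = 3M/4 + (M/2 - c)² / M`.
-/

open Finset

namespace IPA

noncomputable def share (c v : ℝ) : ℝ := max 0 (1 - c / v)

lemma share_nonneg (c v : ℝ) : 0 ≤ share c v := le_max_left _ _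

lemma sub_mul_share_nonneg {c v : ℝ} (hv : 0 < v) : 0 ≤ (v - c) * share c v := by
  rcases le_or_gt (1 - c / v) 0 with h | h
  · simp [share, max_eq_left h]
  · have hcv : c < v := (div_lt_one hv).mp (by linarith)
    exact mul_nonneg (by linarith) (share_nonneg c v)

lemma sub_mul_share_of_le {c v : ℝ} (hv : 0 < v) (hcv : c ≤ v) :
    (v - c) * share c v = (v - c) ^ 2 / v := by
  have hshare : share c v = 1 - c / v :=
    max_eq_right (by linarith [(div_le_one hv).mpr hcv])
  rw [hshare]
  field_simp

lemma add_sub_mul_share_le_welfare {ι : Type*} [Fintype ι] {v : ι → ℝ} {c : ℝ}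
    (hv : ∀ i, 0 < v i) (hsum : ∑ i, share c (v i) = 1) (j : ι) :
    c + (v j - c) * share c (v j) ≤ ∑ i, v i * share c (v i) :=
  calc c + (v j - c) * share c (v j)
      ≤ c * ∑ i, share c (v i) + ∑ i, (v i - c) * share c (v i) := by
        rw [hsum, mul_one]
        gcongr
        exact single_le_sum (fun i _ => sub_mul_share_nonneg (hv i)) (mem_univ j)
    _ = ∑ i, v i * share c (v i) := by
        rw [mul_sum, ← sum_add_distrib]
        exact sum_congr rfl fun i _ => by ring

lemma three_fourths_mul_le_add_sq_div {M : ℝ} (hM : 0 < M) (c : ℝ) :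
    3 / 4 * M ≤ c + (M - c) ^ 2 / M := by
  have h : c + (M - c) ^ 2 / M = 3 / 4 * M + (M / 2 - c) ^ 2 / M := by
    field_simp
    ring
  rw [h]
  linarith [div_nonneg (sq_nonneg (M / 2 - c)) hM.le]

end IPA

open IPA in
theorem ipa_welfare_three_fourths (k : ℕ) (hk : 2 ≤ k) (v : Fin k → ℝ)
    (hv : ∀ i, 0 < v i) (c : ℝ)
    (hsum : ∑ i, max 0 (1 - c / v i) = 1) :
    (3 / 4 : ℝ) * Finset.univ.sup' (Finset.univ_nonempty_iff.mpr ⟨⟨0, by omega⟩⟩) v ≤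
      ∑ i, v i * max 0 (1 - c / v i) := by
  obtain ⟨j, -, hj⟩ := Finset.exists_mem_eq_sup'
    (Finset.univ_nonempty_iff.mpr ⟨(⟨0, by omega⟩ : Fin k)⟩) v
  change 3 / 4 * _ ≤ ∑ i, v i * share c (v i)
  rw [hj]
  have hwelfare := add_sub_mul_share_le_welfare hv hsum j
  by_cases hcv : c ≤ v j
  · rw [sub_mul_share_of_le (hv j) hcv] at hwelfare
    exact (three_fourths_mul_le_add_sq_div (hv j) c).trans hwelfare
  · linarith [sub_mul_share_nonneg (c := c) (hv j), hv j]
end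

section
/- Fix k ≥ 2, v ∈ ℝ_{>0}^k, ℓ > 0, and let x be the Inverse Proportional Allocation with parameter ℓ on v (x_i = max(0, 1 − c·v_i^{−ℓ}), c ≥ 0 normalizing). If v' ∈ ℝ_{>0}^k agrees with v except that v'_j > v_j for a single index j, and x' is the IPA on v', then x'_j ≥ x_j and x'_i ≤ x_i for all i ≠ j. -/
theorem ipa_single_deviation_monotone (ℓ : ℝ) (hℓ : 0 < ℓ) (k : ℕ) (hk : 2 ≤ k)
    (v v' : Fin k → ℝ) (hv : ∀ i, 0 < v i) (hv' : ∀ i, 0 < v' i)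
    (j : Fin k) (hj : v j < v' j) (hagree : ∀ i, i ≠ j → v' i = v i)
    (c c' : ℝ) (hc : 0 ≤ c) (hc' : 0 ≤ c')
    (hsum : ∑ i, max 0 (1 - c * (v i) ^ (-ℓ)) = 1)
    (hsum' : ∑ i, max 0 (1 - c' * (v' i) ^ (-ℓ)) = 1) :
    max 0 (1 - c * (v j) ^ (-ℓ)) ≤ max 0 (1 - c' * (v' j) ^ (-ℓ)) ∧
    ∀ i, i ≠ j → max 0 (1 - c' * (v' i) ^ (-ℓ)) ≤ max 0 (1 - c * (v i) ^ (-ℓ)) := by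
  have hkey : (v' j) ^ (-ℓ) < (v j) ^ (-ℓ) := by
    rw [Real.rpow_neg (hv j).le, Real.rpow_neg (hv' j).le]
    exact inv_strictAnti₀ (Real.rpow_pos_of_pos (hv j) ℓ)
      (Real.rpow_lt_rpow (hv j).le hj hℓ)
  rcases le_or_gt c' c with h | h
  · -- x' ≥ x pointwise; equal sums force equality
    have hle : ∀ i, max 0 (1 - c * (v i) ^ (-ℓ)) ≤ max 0 (1 - c' * (v' i) ^ (-ℓ)) := by
      intro i
      apply max_le_max le_rfl
      by_cases hi : i = j
      · rw [hi]
        have : c' * (v' j) ^ (-ℓ) ≤ c * (v j) ^ (-ℓ) :=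
          mul_le_mul h hkey.le (Real.rpow_pos_of_pos (hv' j) _).le hc
        linarith
      · rw [hagree i hi]
        have : c' * (v i) ^ (-ℓ) ≤ c * (v i) ^ (-ℓ) :=
          mul_le_mul_of_nonneg_right h (Real.rpow_pos_of_pos (hv i) _).le
        linarith
    have heq := (Finset.sum_eq_sum_iff_of_le (fun i _ => hle i)).mp (hsum.trans hsum'.symm)
    exact ⟨(heq j (Finset.mem_univ j)).le,
      fun i hi => (heq i (Finset.mem_univ i)).ge⟩
  · -- c < c' : others decrease directly, j increases by sum argument
    have hothers : ∀ i, i ≠ j → max 0 (1 - c' * (v' i) ^ (-ℓ)) ≤ max 0 (1 - c * (v i) ^ (-ℓ)) := by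
      intro i hi
      apply max_le_max le_rfl
      rw [hagree i hi]
      have : c * (v i) ^ (-ℓ) ≤ c' * (v i) ^ (-ℓ) :=
        mul_le_mul_of_nonneg_right h.le (Real.rpow_pos_of_pos (hv i) _).le
      linarith
    refine ⟨?_, hothers⟩
    have h1 : max 0 (1 - c * (v j) ^ (-ℓ)) +
        ∑ i ∈ Finset.univ.erase j, max 0 (1 - c * (v i) ^ (-ℓ)) = 1 := by
      rw [Finset.add_sum_erase Finset.univ (fun i => max 0 (1 - c * (v i) ^ (-ℓ))) (Finset.mem_univ j)]; exact hsum
    have h2 : max 0 (1 - c' * (v' j) ^ (-ℓ)) +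
        ∑ i ∈ Finset.univ.erase j, max 0 (1 - c' * (v' i) ^ (-ℓ)) = 1 := by
      rw [Finset.add_sum_erase Finset.univ (fun i => max 0 (1 - c' * (v' i) ^ (-ℓ))) (Finset.mem_univ j)]; exact hsum'
    have hS : ∑ i ∈ Finset.univ.erase j, max 0 (1 - c' * (v' i) ^ (-ℓ)) ≤
        ∑ i ∈ Finset.univ.erase j, max 0 (1 - c * (v i) ^ (-ℓ)) :=
      Finset.sum_le_sum (fun i hi => hothers i (Finset.ne_of_mem_erase hi))
    linarith
end
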